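/- Let A be an n×n complex matrix, u, v ∈ ℂⁿ, let m_A be the minimal polynomial of A, let p_{uv} be the polynomial satisfying p_{uv}(λ) = v* m_A(λ)(λIₙ − A)⁻¹u outside the spectrum of A, suppose ζ is a root of p_{uv} of multiplicity exactly k ≥ 1 with m_A(ζ) ≠ 0, and write a_m = v*(ζIₙ − A)^{−m}u. Then for every nonzero τ ∈ ℂ and every λ sufficiently close to ζ (with |λ − ζ| < 1/‖(ζIₙ − A)⁻¹‖) that is an eigenvalue of A + τ u v*, one has 1/τ = ∑_{j=k}^∞ (ζ − λ)^{j} a_{j+1}, where the series converges and a_{k+1} ≠ 0. -/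

import Mathlib

/-!
Around a point ζ outside the spectrum, the resolvent has the Neumann expansion
(λ - A)⁻¹ = ∑ₘ (ζ - λ)ᵐ (ζ - A)⁻⁽ᵐ⁺¹⁾, valid for |λ - ζ| < 1/‖(ζ - A)⁻¹‖, so up to sign the
a_{m+1} are the Taylor coefficients at ζ of f(λ) = v*(λ - A)⁻¹u. Since m_A f = p near ζ and
m_A(ζ) ≠ 0, the analytic order of f at ζ equals the multiplicity k of ζ as a root of p: the first k
coefficients vanish and a_{k+1} ≠ 0. Finally, for λ ∉ σ(A) the matrix determinant lemma gives
det(λ - A - τuv*) = det(λ - A)(1 - τ f(λ)), so λ is an eigenvalue of A + τuv* only if f(λ) = 1/τ.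
-/

open Matrix Polynomial

open Filter Topology

theorem eval_minpoly_eq_zero_of_mem_spectrum {K A : Type*} [Field K] [Ring A] [Algebra K A]
    {a : A} {z : K} (hz : z ∈ spectrum K a) : (minpoly K a).eval z = 0 := by
  have := spectrum.subset_polynomial_aeval a (minpoly K a) ⟨z, hz, rfl⟩
  rw [minpoly.aeval, spectrum.mem_iff, sub_zero] at this
  by_contra h
  exact this ((IsUnit.mk0 _ h).map (algebraMap K A))

section AnalyticOrder

variable {𝕜 E : Type*} [NontriviallyNormedField 𝕜] [NormedAddCommGroup E] [NormedSpace 𝕜 E]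
  {f : 𝕜 → E} {p : FormalMultilinearSeries 𝕜 𝕜 E} {z₀ : 𝕜}

theorem HasFPowerSeriesAt.analyticOrderAt_eq_order (hp : HasFPowerSeriesAt f p z₀) (h : p ≠ 0) :
    analyticOrderAt f z₀ = p.order :=
  hp.analyticAt.analyticOrderAt_eq_natCast.mpr
    ⟨_, ⟨_, hp.has_fpower_series_iterate_dslope_fslope p.order⟩,
      hp.iterate_dslope_fslope_ne_zero h, .of_forall hp.eq_pow_order_mul_iterate_dslope⟩

theorem HasFPowerSeriesAt.coeff_eq_zero_of_lt_analyticOrderAt (hp : HasFPowerSeriesAt f p z₀)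
    {m : ℕ} (hm : m < analyticOrderAt f z₀) : p.coeff m = 0 := by
  rcases eq_or_ne p 0 with rfl | h
  · rfl
  rw [hp.analyticOrderAt_eq_order h, Nat.cast_lt] at hm
  exact p.coeff_eq_zero.mpr (p.apply_eq_zero_of_lt_order hm)

theorem HasFPowerSeriesAt.coeff_ne_zero_of_analyticOrderAt_eq (hp : HasFPowerSeriesAt f p z₀)
    {k : ℕ} (hk : analyticOrderAt f z₀ = k) : p.coeff k ≠ 0 := by
  have h : p ≠ 0 := by
    rintro rfl
    rw [analyticOrderAt_eq_top.mpr (hp.locally_zero_iff.mpr rfl)] at hk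
    exact ENat.top_ne_natCast k hk
  rw [hp.analyticOrderAt_eq_order h, Nat.cast_inj] at hk
  rw [Ne, p.coeff_eq_zero, ← hk]
  exact p.apply_order_ne_zero h

end AnalyticOrder

section PolynomialOrder

variable {𝕜 : Type*} [NontriviallyNormedField 𝕜]

theorem Polynomial.analyticOrderAt_eval_eq_rootMultiplicity {p : 𝕜[X]} (hp : p ≠ 0) (ζ : 𝕜) :
    analyticOrderAt (eval · p) ζ = p.rootMultiplicity ζ := by
  rw [(AnalyticOnNhd.eval_polynomial p ζ trivial).analyticOrderAt_eq_natCast]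
  refine ⟨_, AnalyticOnNhd.eval_polynomial _ ζ trivial,
    eval_divByMonic_pow_rootMultiplicity_ne_zero ζ hp, .of_forall fun z => ?_⟩
  conv_lhs => rw [← pow_mul_divByMonic_rootMultiplicity_eq p ζ]
  simp

theorem analyticOrderAt_eq_rootMultiplicity_of_eval_mul_eq {f : 𝕜 → 𝕜} {p m : 𝕜[X]} {ζ : 𝕜}
    (hf : AnalyticAt 𝕜 f ζ) (hp : p ≠ 0) (hm : m.eval ζ ≠ 0)
    (hfm : ∀ᶠ z in 𝓝 ζ, m.eval z * f z = p.eval z) :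
    analyticOrderAt f ζ = p.rootMultiplicity ζ := by
  have hm_an : AnalyticAt 𝕜 (eval · m) ζ := AnalyticOnNhd.eval_polynomial m ζ trivial
  rw [← analyticOrderAt_eval_eq_rootMultiplicity hp, ← analyticOrderAt_congr hfm,
    ← Pi.mul_def, analyticOrderAt_mul hm_an hf,
    (analyticOrderAt_eq_zero (f := (eval · m))).mpr (Or.inr hm), zero_add]

end PolynomialOrder

section Resolvent

variable {𝕜 B : Type*} [NontriviallyNormedField 𝕜] [NormedRing B] [NormedAlgebra 𝕜 B]
  {a : B} {ζ : 𝕜}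

theorem algebraMap_sub_eq_mul_one_add_smul_resolvent (hζ : ζ ∉ spectrum 𝕜 a) (z : 𝕜) :
    algebraMap 𝕜 B z - a = (algebraMap 𝕜 B ζ - a) * (1 + (z - ζ) • resolvent a ζ) := by
  rw [mul_add, mul_one, mul_smul_comm, resolvent,
    Ring.mul_inverse_cancel _ (spectrum.notMem_iff.mp hζ)]
  simp only [Algebra.algebraMap_eq_smul_one, sub_smul]
  abel

theorem resolvent_eq_inverse_one_add_smul_mul (hζ : ζ ∉ spectrum 𝕜 a) (z : 𝕜) :
    resolvent a z = Ring.inverse (1 + (z - ζ) • resolvent a ζ) * resolvent a ζ := by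
  have hu := spectrum.notMem_iff.mp hζ
  have hcomm : Commute (algebraMap 𝕜 B ζ - a) (1 + (z - ζ) • resolvent a ζ) := by
    refine (Commute.one_right _).add_right (Commute.smul_right ?_ _)
    rw [resolvent, Commute, SemiconjBy, Ring.mul_inverse_cancel _ hu, Ring.inverse_mul_cancel _ hu]
  rw [resolvent, algebraMap_sub_eq_mul_one_add_smul_resolvent hζ z, Ring.mul_inverse_rev' hcomm]
  rfl

variable [HasSummableGeomSeries B]

theorem spectrum.notMem_of_norm_sub_lt (hζ : ζ ∉ spectrum 𝕜 a) {z : 𝕜}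
    (hz : ‖z - ζ‖ < ‖resolvent a ζ‖⁻¹) : z ∉ spectrum 𝕜 a := by
  have hsmall : ‖-((z - ζ) • resolvent a ζ)‖ < 1 := by
    rw [norm_neg]
    refine (norm_smul_le _ _).trans_lt ?_
    rcases (norm_nonneg (resolvent a ζ)).eq_or_lt with h | h
    · simp [← h]
    · calc ‖z - ζ‖ * ‖resolvent a ζ‖ < ‖resolvent a ζ‖⁻¹ * ‖resolvent a ζ‖ := by gcongr
        _ = 1 := inv_mul_cancel₀ h.ne'
  rw [spectrum.notMem_iff, algebraMap_sub_eq_mul_one_add_smul_resolvent hζ z]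
  simpa using (spectrum.notMem_iff.mp hζ).mul (Units.oneSub _ hsmall).isUnit

theorem hasFPowerSeriesOnBall_resolvent (hζ : ζ ∉ spectrum 𝕜 a) :
    HasFPowerSeriesOnBall (resolvent a)
      (fun n => ContinuousMultilinearMap.mkPiRing 𝕜 (Fin n) ((-1 : 𝕜) ^ n • resolvent a ζ ^ (n + 1)))
      ζ ‖resolvent a ζ‖₊⁻¹ := by
  have h := (((ContinuousLinearMap.mul 𝕜 B).flip (resolvent a ζ)).comp_hasFPowerSeriesOnBall
    (spectrum.hasFPowerSeriesOnBall_inverse_one_sub_smul 𝕜 (-resolvent a ζ))).comp_sub ζ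
  have hf : (fun z => ((ContinuousLinearMap.mul 𝕜 B).flip (resolvent a ζ) ∘
      fun w => Ring.inverse (1 - w • -resolvent a ζ)) (z - ζ)) = resolvent a := by
    ext z
    simp [resolvent_eq_inverse_one_add_smul_mul hζ z]
  have hp : (fun n => ContinuousMultilinearMap.mkPiRing 𝕜 (Fin n)
      ((-1 : 𝕜) ^ n • resolvent a ζ ^ (n + 1)) : FormalMultilinearSeries 𝕜 𝕜 B) =
      ((ContinuousLinearMap.mul 𝕜 B).flip (resolvent a ζ)).compFormalMultilinearSeries
        fun n => ContinuousMultilinearMap.mkPiRing 𝕜 (Fin n) ((-resolvent a ζ) ^ n) := by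
    ext n
    change _ = ((∏ _ : Fin n, (1 : 𝕜)) • (-resolvent a ζ) ^ n) * resolvent a ζ
    simp [neg_pow (resolvent a ζ), pow_succ, mul_assoc, Algebra.smul_def]
  rw [zero_add, nnnorm_neg, hf] at h
  rwa [hp]

theorem hasSum_resolvent (hζ : ζ ∉ spectrum 𝕜 a) {z : 𝕜} (hz : ‖z - ζ‖ < ‖resolvent a ζ‖⁻¹) :
    HasSum (fun n => (ζ - z) ^ n • resolvent a ζ ^ (n + 1)) (resolvent a z) := by
  have hmem : z - ζ ∈ Metric.eball (0 : 𝕜) ‖resolvent a ζ‖₊⁻¹ := by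
    rw [Metric.mem_eball, edist_zero_right]
    rcases eq_or_ne ‖resolvent a ζ‖₊ 0 with h | h
    · simp [h]
    · rw [← ENNReal.coe_inv h, ← ofReal_norm,
        ENNReal.ofReal_lt_iff_lt_toReal (norm_nonneg _) (by simp)]
      simpa using hz
  have h := (hasFPowerSeriesOnBall_resolvent hζ).hasSum hmem
  rw [add_sub_cancel] at h
  have hterm (n : ℕ) : ContinuousMultilinearMap.mkPiRing 𝕜 (Fin n)
      ((-1 : 𝕜) ^ n • resolvent a ζ ^ (n + 1)) (fun _ => z - ζ) =
      (ζ - z) ^ n • resolvent a ζ ^ (n + 1) := by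
    rw [ContinuousMultilinearMap.mkPiRing_apply, smul_smul, Finset.prod_const, Finset.card_fin,
      ← mul_pow, mul_neg_one, neg_sub]
  simpa only [hterm] using h

end Resolvent

theorem hasSum_nat_add_of_forall_lt_eq_zero {G : Type*} [AddCommGroup G] [TopologicalSpace G]
    [IsTopologicalAddGroup G] {f : ℕ → G} {s : G} {k : ℕ} (hf : ∀ i < k, f i = 0)
    (h : HasSum f s) : HasSum (fun j => f (k + j)) s := by
  rw [← hasSum_nat_add_iff' k, Finset.sum_eq_zero fun i hi => hf i (Finset.mem_range.mp hi),
    sub_zero] at h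
  simpa only [add_comm k] using h

theorem Matrix.det_one_add_vecMulVec {R n : Type*} [CommRing R] [Fintype n] [DecidableEq n]
    (x w : n → R) : det (1 + vecMulVec x w) = 1 + w ⬝ᵥ x := by
  rw [vecMulVec_eq (ι := Unit), det_one_add_replicateCol_mul_replicateRow]

theorem dotProduct_inv_mulVec_eq_inv_of_mem_spectrum_add_smul_vecMulVec {K n : Type*}
    [Field K] [Fintype n] [DecidableEq n] {A : Matrix n n K} {u w : n → K} {τ z : K}
    (hA : z ∉ spectrum K A) (h : z ∈ spectrum K (A + τ • vecMulVec u w)) :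
    w ⬝ᵥ (z • 1 - A)⁻¹ *ᵥ u = τ⁻¹ := by
  rw [spectrum.notMem_iff, Algebra.algebraMap_eq_smul_one, isUnit_iff_isUnit_det] at hA
  rw [spectrum.mem_iff, Algebra.algebraMap_eq_smul_one, isUnit_iff_isUnit_det] at h
  have hfactor : z • 1 - (A + τ • vecMulVec u w) =
      (z • 1 - A) * (1 + vecMulVec ((z • 1 - A)⁻¹ *ᵥ (-τ • u)) w) := by
    rw [mul_add, mul_one, ← mul_vecMulVec, mul_nonsing_inv_cancel_left _ _ hA, smul_vecMulVec]
    module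
  rw [hfactor, det_mul, det_one_add_vecMulVec, mulVec_smul, dotProduct_smul, smul_eq_mul] at h
  refine eq_inv_of_mul_eq_one_right ?_
  contrapose! h
  refine hA.mul (isUnit_iff_ne_zero.mpr ?_)
  contrapose! h
  linear_combination -h

theorem Matrix.resolvent_eq_inv {𝕜 n : Type*} [Field 𝕜] [Fintype n] [DecidableEq n]
    (A : Matrix n n 𝕜) (z : 𝕜) : resolvent A z = (z • 1 - A)⁻¹ := by
  rw [resolvent, Algebra.algebraMap_eq_smul_one, nonsing_inv_eq_ringInverse]

section MatrixResolvent

open scoped Matrix.Norms.L2Operator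

variable {𝕜 n : Type*} [RCLike 𝕜] [Fintype n]

noncomputable def Matrix.dotProductMulVecCLM (w u : n → 𝕜) : Matrix n n 𝕜 →L[𝕜] 𝕜 :=
  LinearMap.toContinuousLinearMap
    { toFun := fun M => w ⬝ᵥ M *ᵥ u
      map_add' := fun M N => by simp [add_mulVec, dotProduct_add]
      map_smul' := fun c M => by simp [smul_mulVec, dotProduct_smul] }

@[simp]
theorem Matrix.dotProductMulVecCLM_apply (w u : n → 𝕜) (M : Matrix n n 𝕜) :
    dotProductMulVecCLM w u M = w ⬝ᵥ M *ᵥ u :=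
  rfl

theorem exists_hasFPowerSeriesAt_dotProduct_inv_mulVec [DecidableEq n] {A : Matrix n n 𝕜} {ζ : 𝕜}
    (w u : n → 𝕜) (hζ : ζ ∉ spectrum 𝕜 A) :
    ∃ P : FormalMultilinearSeries 𝕜 𝕜 𝕜,
      HasFPowerSeriesAt (fun z : 𝕜 => w ⬝ᵥ (z • 1 - A)⁻¹ *ᵥ u) P ζ ∧
      ∀ m, P.coeff m = (-1) ^ m * (w ⬝ᵥ (ζ • 1 - A)⁻¹ ^ (m + 1) *ᵥ u) := by
  have hf : (fun z : 𝕜 => w ⬝ᵥ (z • 1 - A)⁻¹ *ᵥ u) = dotProductMulVecCLM w u ∘ resolvent A := by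
    ext z
    simp [resolvent_eq_inv]
  refine ⟨_, hf ▸ ((dotProductMulVecCLM w u).comp_hasFPowerSeriesOnBall
    (hasFPowerSeriesOnBall_resolvent hζ)).hasFPowerSeriesAt, fun m => ?_⟩
  change dotProductMulVecCLM w u
    ((∏ _ : Fin m, (1 : 𝕜)) • ((-1 : 𝕜) ^ m • resolvent A ζ ^ (m + 1))) = _
  rw [Finset.prod_const_one, one_smul, map_smul, resolvent_eq_inv, dotProductMulVecCLM_apply,
    smul_eq_mul]

theorem hasSum_dotProduct_inv_mulVec [DecidableEq n] {A : Matrix n n 𝕜} {ζ z : 𝕜} (w u : n → 𝕜)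
    (hζ : ζ ∉ spectrum 𝕜 A)
    (hz : ‖z - ζ‖ < ‖toEuclideanCLM (n := n) (𝕜 := 𝕜) (ζ • 1 - A)⁻¹‖⁻¹) :
    HasSum (fun m => (ζ - z) ^ m * (w ⬝ᵥ (ζ • 1 - A)⁻¹ ^ (m + 1) *ᵥ u))
      (w ⬝ᵥ (z • 1 - A)⁻¹ *ᵥ u) := by
  rw [← cstar_norm_def, ← resolvent_eq_inv] at hz
  simpa [resolvent_eq_inv] using (hasSum_resolvent hζ hz).mapL (dotProductMulVecCLM w u)

theorem Matrix.notMem_spectrum_of_norm_sub_lt [DecidableEq n] {A : Matrix n n 𝕜} {ζ z : 𝕜}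
    (hζ : ζ ∉ spectrum 𝕜 A)
    (hz : ‖z - ζ‖ < ‖toEuclideanCLM (n := n) (𝕜 := 𝕜) (ζ • 1 - A)⁻¹‖⁻¹) : z ∉ spectrum 𝕜 A := by
  rw [← cstar_norm_def, ← resolvent_eq_inv] at hz
  exact spectrum.notMem_of_norm_sub_lt hζ hz

end MatrixResolvent

theorem analyticOrderAt_dotProduct_inv_mulVec_eq_rootMultiplicity {𝕜 n : Type*} [RCLike 𝕜]
    [Fintype n] [DecidableEq n] {A : Matrix n n 𝕜} {w u : n → 𝕜} {p : 𝕜[X]} {ζ : 𝕜}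
    (hp : ∀ z ∉ spectrum 𝕜 A, p.eval z = (minpoly 𝕜 A).eval z * (w ⬝ᵥ (z • 1 - A)⁻¹ *ᵥ u))
    (hp0 : p ≠ 0) (hm : (minpoly 𝕜 A).eval ζ ≠ 0) :
    analyticOrderAt (fun z : 𝕜 => w ⬝ᵥ (z • 1 - A)⁻¹ *ᵥ u) ζ = p.rootMultiplicity ζ := by
  have hζ : ζ ∉ spectrum 𝕜 A := fun h => hm (eval_minpoly_eq_zero_of_mem_spectrum h)
  obtain ⟨P, hP, -⟩ := exists_hasFPowerSeriesAt_dotProduct_inv_mulVec w u hζ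
  refine analyticOrderAt_eq_rootMultiplicity_of_eval_mul_eq hP.analyticAt hp0 hm ?_
  filter_upwards [(minpoly 𝕜 A).continuous.continuousAt.eventually_ne hm] with z hz
  rw [hp z fun h => hz (eval_minpoly_eq_zero_of_mem_spectrum h)]

theorem stmt15 {n : ℕ} (A : Matrix (Fin n) (Fin n) ℂ) (u v : Fin n → ℂ)
    (p : Polynomial ℂ)
    (hp : ∀ lam ∉ spectrum ℂ A,
      p.eval lam = (minpoly ℂ A).eval lam *
        (star v ⬝ᵥ (lam • (1 : Matrix (Fin n) (Fin n) ℂ) - A)⁻¹.mulVec u))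
    (ζ : ℂ) (k : ℕ) (hk : 1 ≤ k)
    (hmult : p.rootMultiplicity ζ = k)
    (hm : (minpoly ℂ A).eval ζ ≠ 0)
    (a : ℕ → ℂ)
    (ha : ∀ m : ℕ,
      a m = star v ⬝ᵥ (((ζ • (1 : Matrix (Fin n) (Fin n) ℂ) - A)⁻¹) ^ m).mulVec u) :
    a (k + 1) ≠ 0 ∧
    ∀ τ : ℂ, τ ≠ 0 → ∀ lam : ℂ,
      ‖lam - ζ‖ <
        1 / ‖Matrix.toEuclideanCLM (𝕜 := ℂ) ((ζ • (1 : Matrix (Fin n) (Fin n) ℂ) - A)⁻¹)‖ →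
      lam ∈ spectrum ℂ (A + τ • vecMulVec u (star v)) →
      HasSum (fun j : ℕ => (ζ - lam) ^ (k + j) * a (k + j + 1)) (1 / τ) := by
  have hζ : ζ ∉ spectrum ℂ A := fun h => hm (eval_minpoly_eq_zero_of_mem_spectrum h)
  have hp0 : p ≠ 0 := by
    rintro rfl
    rw [rootMultiplicity_zero] at hmult
    omega
  obtain ⟨P, hP, hcoeff⟩ := exists_hasFPowerSeriesAt_dotProduct_inv_mulVec (star v) u hζ
  have horder := analyticOrderAt_dotProduct_inv_mulVec_eq_rootMultiplicity hp hp0 hm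
  simp only [← ha, hmult] at hcoeff horder
  have hlow (i : ℕ) (hi : i < k) : a (i + 1) = 0 := by
    simpa [hcoeff] using hP.coeff_eq_zero_of_lt_analyticOrderAt (horder ▸ Nat.cast_lt.mpr hi)
  refine ⟨fun h0 => hP.coeff_ne_zero_of_analyticOrderAt_eq horder (by rw [hcoeff, h0, mul_zero]),
    fun τ _ lam hlam hspec => ?_⟩
  rw [one_div] at hlam ⊢
  have hsum := hasSum_dotProduct_inv_mulVec (star v) u hζ hlam
  rw [dotProduct_inv_mulVec_eq_inv_of_mem_spectrum_add_smul_vecMulVec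
    (Matrix.notMem_spectrum_of_norm_sub_lt hζ hlam) hspec] at hsum
  simp only [← ha] at hsum
  exact hasSum_nat_add_of_forall_lt_eq_zero (fun i hi => by rw [hlow i hi, mul_zero]) hsum
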